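/- arXiv:0907.1185 — 3 statements merged into one kernel-verified Lean document; each statement's English description precedes it below -/
import Mathlib

section
/- Let {ξ_j : j ≥ 1} be a strictly stationary sequence of real random variables, λ > 0, θ > 0, and (u_n) a sequence of reals such that n·P(ξ₁ > u_n) → λ and P(max_{1≤j≤⌊nt⌋} ξ_j ≤ u_n) → e^{-θλt} for all t > 0. Then for every t > 0, P(max_{2≤j≤⌊nt⌋} ξ_j > u_n | ξ₁ > u_n) → 1 − θ e^{-θλt} as n → ∞. -/
/-!
Write `F_n(k) = P(ξ_1 ≤ u_n, …, ξ_k ≤ u_n)`. By stationarity the increment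
`F_n(k) - F_n(k + 1)` equals `P(ξ_1 > u_n, ξ_2 ≤ u_n, …, ξ_{k+1} ≤ u_n)`, which is nonincreasing
in `k`: each `F_n` is a convex sequence. Hence the increment at `⌊nt⌋` lies between the chord
slopes of `F_n` over `[⌊ns⌋, ⌊nt⌋]` and `[⌊nt⌋, ⌊nr⌋]` (`s < t < r`), which after rescaling by `n`
tend to the chord slopes of `φ(s) = e^{-θλs}`. Letting `s, r → t` gives
`n (F_n(⌊nt⌋ - 1) - F_n(⌊nt⌋)) → -φ'(t) = θλe^{-θλt}`, and dividing by `n P(ξ_1 > u_n) → λ`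
shows `P(max_{2 ≤ j ≤ ⌊nt⌋} ξ_j ≤ u_n | ξ_1 > u_n) → θe^{-θλt}`.
-/

open MeasureTheory Filter Set Topology

theorem sub_eq_sum_Ico_sub (f : ℕ → ℝ) {a b : ℕ} (hab : a ≤ b) :
    f a - f b = ∑ i ∈ Finset.Ico a b, (f i - f (i + 1)) := by
  rw [← neg_sub, ← Finset.sum_Ico_sub f hab, ← Finset.sum_neg_distrib]
  simp only [neg_sub]

section AntitoneIncrements

variable {f : ℕ → ℝ}

theorem sub_le_mul_of_antitone_sub (hf : Antitone fun k => f k - f (k + 1)) {a b k : ℕ}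
    (hka : k ≤ a) (hab : a ≤ b) : f a - f b ≤ ((b : ℝ) - a) * (f k - f (k + 1)) := by
  have := Finset.sum_le_card_nsmul (Finset.Ico a b) _ _ fun i hi =>
    hf (hka.trans (Finset.mem_Ico.mp hi).1)
  rwa [← sub_eq_sum_Ico_sub f hab, Nat.card_Ico, nsmul_eq_mul, Nat.cast_sub hab] at this

theorem mul_le_sub_of_antitone_sub (hf : Antitone fun k => f k - f (k + 1)) {a b k : ℕ}
    (hab : a ≤ b) (hbk : b ≤ k + 1) : ((b : ℝ) - a) * (f k - f (k + 1)) ≤ f a - f b := by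
  have := Finset.card_nsmul_le_sum (Finset.Ico a b) _ _ fun i hi =>
    hf (Nat.lt_succ_iff.mp ((Finset.mem_Ico.mp hi).2.trans_le hbk))
  rwa [← sub_eq_sum_Ico_sub f hab, Nat.card_Ico, nsmul_eq_mul, Nat.cast_sub hab] at this

end AntitoneIncrements

section FloorAsymptotics

theorem tendsto_floor_mul_div_natCast {s : ℝ} (hs : 0 ≤ s) :
    Tendsto (fun n : ℕ => (⌊(n : ℝ) * s⌋₊ : ℝ) / n) atTop (𝓝 s) :=
  ((tendsto_nat_floor_mul_div_atTop hs).comp tendsto_natCast_atTop_atTop).congr fun _ => by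
    simp [mul_comm]

theorem tendsto_floor_sub_floor_div_natCast {s r : ℝ} (hs : 0 ≤ s) (hr : 0 ≤ r) :
    Tendsto (fun n : ℕ => ((⌊(n : ℝ) * r⌋₊ : ℝ) - ⌊(n : ℝ) * s⌋₊) / n) atTop (𝓝 (r - s)) :=
  ((tendsto_floor_mul_div_natCast hr).sub (tendsto_floor_mul_div_natCast hs)).congr fun _ =>
    (sub_div _ _ _).symm

theorem eventually_floor_lt_floor {s r : ℝ} (hs : 0 ≤ s) (hsr : s < r) :
    ∀ᶠ n : ℕ in atTop, ⌊(n : ℝ) * s⌋₊ < ⌊(n : ℝ) * r⌋₊ := by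
  filter_upwards [(tendsto_floor_sub_floor_div_natCast hs (hs.trans hsr.le)).eventually
    (lt_mem_nhds (sub_pos.mpr hsr))] with n hn
  by_contra hle
  have : ((⌊(n : ℝ) * r⌋₊ : ℝ) - ⌊(n : ℝ) * s⌋₊) / n ≤ 0 :=
    div_nonpos_of_nonpos_of_nonneg (sub_nonpos.mpr (by exact_mod_cast not_lt.mp hle))
      n.cast_nonneg
  linarith

theorem eventually_floor_mul_pos {t : ℝ} (ht : 0 < t) :
    ∀ᶠ n : ℕ in atTop, 0 < ⌊(n : ℝ) * t⌋₊ := by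
  simpa using eventually_floor_lt_floor le_rfl ht

end FloorAsymptotics

section DiscreteDerivative

variable {F : ℕ → ℕ → ℝ} {φ : ℝ → ℝ} {t : ℝ}

theorem tendsto_floor_difference_quotient
    (hlim : ∀ s, 0 < s → Tendsto (fun n : ℕ => F n ⌊(n : ℝ) * s⌋₊) atTop (𝓝 (φ s)))
    (ht : 0 < t) {x : ℝ} (hx : 0 < x) (hxt : x ≠ t) :
    Tendsto (fun n : ℕ => n * (F n ⌊(n : ℝ) * t⌋₊ - F n ⌊(n : ℝ) * x⌋₊) /
      ((⌊(n : ℝ) * x⌋₊ : ℝ) - ⌊(n : ℝ) * t⌋₊)) atTop (𝓝 (-slope φ t x)) := by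
  have hinv := (tendsto_floor_sub_floor_div_natCast ht.le hx.le).inv₀ (sub_ne_zero.mpr hxt)
  convert ((hlim t ht).sub (hlim x hx)).mul hinv using 1
  · ext n
    rw [inv_div]
    ring
  · rw [slope_def_field, ← neg_div, neg_sub, div_eq_mul_inv]

theorem eventually_mul_sub_le_difference_quotient
    (hanti : ∀ n, Antitone fun k => F n k - F n (k + 1)) {x : ℝ} (hx : 0 ≤ x) (hxt : x < t) :
    ∀ᶠ n : ℕ in atTop, n * (F n (⌊(n : ℝ) * t⌋₊ - 1) - F n ⌊(n : ℝ) * t⌋₊) ≤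
      n * (F n ⌊(n : ℝ) * t⌋₊ - F n ⌊(n : ℝ) * x⌋₊) /
        ((⌊(n : ℝ) * x⌋₊ : ℝ) - ⌊(n : ℝ) * t⌋₊) := by
  filter_upwards [eventually_floor_lt_floor hx hxt] with n hlt
  set a := ⌊(n : ℝ) * x⌋₊
  set m := ⌊(n : ℝ) * t⌋₊
  have hm : m - 1 + 1 = m := Nat.sub_add_cancel (by omega)
  have h := mul_le_sub_of_antitone_sub (hanti n) hlt.le hm.ge
  rw [hm] at h
  have hpos : (0 : ℝ) < m - a := sub_pos.mpr (by exact_mod_cast hlt)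
  rw [mul_div_assoc, ← neg_div_neg_eq, neg_sub, neg_sub]
  gcongr
  rw [le_div_iff₀ hpos]
  linarith

theorem eventually_difference_quotient_le_mul_sub
    (hanti : ∀ n, Antitone fun k => F n k - F n (k + 1)) (ht : 0 < t) {x : ℝ} (htx : t < x) :
    ∀ᶠ n : ℕ in atTop,
      n * (F n ⌊(n : ℝ) * t⌋₊ - F n ⌊(n : ℝ) * x⌋₊) /
          ((⌊(n : ℝ) * x⌋₊ : ℝ) - ⌊(n : ℝ) * t⌋₊) ≤
        n * (F n (⌊(n : ℝ) * t⌋₊ - 1) - F n ⌊(n : ℝ) * t⌋₊) := by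
  filter_upwards [eventually_floor_lt_floor ht.le htx, eventually_floor_mul_pos ht]
    with n hlt hm_pos
  set a := ⌊(n : ℝ) * x⌋₊
  set m := ⌊(n : ℝ) * t⌋₊
  have h := sub_le_mul_of_antitone_sub (hanti n) (Nat.sub_le m 1) hlt.le
  rw [Nat.sub_add_cancel hm_pos] at h
  have hpos : (0 : ℝ) < a - m := sub_pos.mpr (by exact_mod_cast hlt)
  rw [mul_div_assoc]
  gcongr
  rw [div_le_iff₀ hpos]
  linarith

theorem tendsto_mul_sub_floor_of_hasDerivAt
    (hanti : ∀ n, Antitone fun k => F n k - F n (k + 1))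
    (hlim : ∀ s, 0 < s → Tendsto (fun n : ℕ => F n ⌊(n : ℝ) * s⌋₊) atTop (𝓝 (φ s)))
    (ht : 0 < t) {φ' : ℝ} (hφ : HasDerivAt φ φ' t) :
    Tendsto (fun n : ℕ => n * (F n (⌊(n : ℝ) * t⌋₊ - 1) - F n ⌊(n : ℝ) * t⌋₊)) atTop
      (𝓝 (-φ')) := by
  have hslope : Tendsto (fun x => -slope φ t x) (𝓝[≠] t) (𝓝 (-φ')) :=
    (hasDerivAt_iff_tendsto_slope.mp hφ).neg
  refine tendsto_order.2 ⟨fun a ha => ?_, fun b hb => ?_⟩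
  · obtain ⟨x, hxa, htx⟩ := ((hslope.mono_left (nhdsGT_le_nhdsNE t)).eventually
      (lt_mem_nhds ha) |>.and self_mem_nhdsWithin).exists
    filter_upwards [(tendsto_floor_difference_quotient hlim ht (ht.trans htx) htx.ne').eventually
      (lt_mem_nhds hxa), eventually_difference_quotient_le_mul_sub hanti ht htx] with n h1 h2
    exact h1.trans_le h2
  · obtain ⟨x, hxb, hxt⟩ := ((hslope.mono_left (nhdsLT_le_nhdsNE t)).eventually
      (gt_mem_nhds hb) |>.and (Ioo_mem_nhdsLT ht)).exists
    filter_upwards [(tendsto_floor_difference_quotient hlim ht hxt.1 hxt.2.ne).eventually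
      (gt_mem_nhds hxb), eventually_mul_sub_le_difference_quotient hanti hxt.1.le hxt.2]
      with n h1 h2
    exact h2.trans_lt h1

end DiscreteDerivative

section Stationarity

variable {Ω β : Type*} [MeasurableSpace Ω] [MeasurableSpace β]

def IsStrictlyStationary (μ : Measure Ω) (ξ : ℕ → Ω → β) : Prop :=
  ∀ m : ℕ, μ.map (fun ω i => ξ (i + m) ω) = μ.map (fun ω i => ξ i ω)

variable {μ : Measure Ω} {ξ : ℕ → Ω → ℝ}

theorem measurableSet_forall_le (hξ : ∀ j, Measurable (ξ j)) (c : ℝ) (a b : ℕ) :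
    MeasurableSet {ω | ∀ j, a ≤ j → j ≤ b → ξ j ω ≤ c} :=
  measurableSet_setOfPred.mpr <| Measurable.forall fun j =>
    measurable_const.imp <| measurable_const.imp <|
      measurableSet_setOfPred.mp (measurableSet_le (hξ j) measurable_const)

theorem measureReal_exists_lt_inter [IsFiniteMeasure μ] (hξ : ∀ j, Measurable (ξ j)) (c : ℝ)
    (a b : ℕ) (B : Set Ω) :
    μ.real ({ω | ∃ j, a ≤ j ∧ j ≤ b ∧ c < ξ j ω} ∩ B) =
      μ.real B - μ.real ({ω | ∀ j, a ≤ j → j ≤ b → ξ j ω ≤ c} ∩ B) := by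
  rw [inter_comm _ B, inter_comm _ B,
    ← measureReal_sdiff_add_inter (s := B) (measurableSet_forall_le hξ c a b),
    add_sub_cancel_right]
  congr 1
  ext ω
  simp

theorem IsStrictlyStationary.measure_forall_le_add (hstat : IsStrictlyStationary μ ξ)
    (hξ : ∀ j, Measurable (ξ j)) (c : ℝ) (a b m : ℕ) :
    μ {ω | ∀ j, a + m ≤ j → j ≤ b + m → ξ j ω ≤ c} =
      μ {ω | ∀ j, a ≤ j → j ≤ b → ξ j ω ≤ c} := by
  have hS := measurableSet_forall_le (ξ := fun j (f : ℕ → ℝ) => f j) measurable_pi_apply c a b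
  have h := congrArg (· {f : ℕ → ℝ | ∀ j, a ≤ j → j ≤ b → f j ≤ c}) (hstat m)
  simp only [Measure.map_apply (measurable_pi_lambda _ fun i => hξ (i + m)) hS,
    Measure.map_apply (measurable_pi_lambda _ hξ) hS] at h
  refine Eq.trans (congrArg μ ?_) h
  ext ω
  constructor
  · intro hω j haj hjb
    exact hω (j + m) (by omega) (by omega)
  · intro hω j haj hjb
    simpa [Nat.sub_add_cancel (show m ≤ j by omega)] using hω (j - m) (by omega) (by omega)

theorem IsStrictlyStationary.measureReal_forall_le_sub_succ [IsFiniteMeasure μ]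
    (hstat : IsStrictlyStationary μ ξ) (hξ : ∀ j, Measurable (ξ j)) (c : ℝ) (k : ℕ) :
    μ.real {ω | ∀ j, 1 ≤ j → j ≤ k → ξ j ω ≤ c} -
        μ.real {ω | ∀ j, 1 ≤ j → j ≤ k + 1 → ξ j ω ≤ c} =
      μ.real ({ω | ∀ j, 2 ≤ j → j ≤ k + 1 → ξ j ω ≤ c} ∩ {ω | c < ξ 1 ω}) := by
  set C := {ω | ∀ j, 2 ≤ j → j ≤ k + 1 → ξ j ω ≤ c}
  have hshift : μ.real C = μ.real {ω | ∀ j, 1 ≤ j → j ≤ k → ξ j ω ≤ c} :=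
    congrArg ENNReal.toReal (hstat.measure_forall_le_add hξ c 1 k 1)
  have hsdiff : C \ {ω | c < ξ 1 ω} = {ω | ∀ j, 1 ≤ j → j ≤ k + 1 → ξ j ω ≤ c} := by
    ext ω
    simp only [C, Set.mem_sdiff, Set.mem_ofPred_eq, not_lt]
    constructor
    · rintro ⟨hω, hω1⟩ j h1j hjk
      rcases h1j.eq_or_lt with rfl | h2j
      · exact hω1
      · exact hω j h2j hjk
    · intro hω
      exact ⟨fun j h2j hjk => hω j (by omega) hjk, hω 1 le_rfl (by omega)⟩
  rw [← hshift, ← hsdiff,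
    ← measureReal_inter_add_sdiff (s := C) (measurableSet_lt measurable_const (hξ 1))]
  ring

end Stationarity

theorem stmt_1_general {Ω : Type*} [MeasurableSpace Ω] (μ : Measure Ω) [IsProbabilityMeasure μ]
    (ξ : ℕ → Ω → ℝ) (hmeas : ∀ j, Measurable (ξ j))
    -- strict stationarity: the law of the process is shift invariant
    (hstat : ∀ m : ℕ,
      Measure.map (fun ω => (fun i : ℕ => ξ (i + m) ω)) μ
        = Measure.map (fun ω => (fun i : ℕ => ξ i ω)) μ)
    (lam θ : ℝ) (hlam : 0 < lam) (u : ℕ → ℝ)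
    (htail : Tendsto (fun n : ℕ => (n : ℝ) * (μ {ω | u n < ξ 1 ω}).toReal)
      atTop (nhds lam))
    (hmax : ∀ t : ℝ, 0 < t →
      Tendsto (fun n : ℕ =>
          (μ {ω | ∀ j, 1 ≤ j → j ≤ ⌊(n : ℝ) * t⌋₊ → ξ j ω ≤ u n}).toReal)
        atTop (nhds (Real.exp (-θ * lam * t)))) :
    ∀ t : ℝ, 0 < t →
      Tendsto (fun n : ℕ =>
          (μ ({ω | ∃ j, 2 ≤ j ∧ j ≤ ⌊(n : ℝ) * t⌋₊ ∧ u n < ξ j ω}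
              ∩ {ω | u n < ξ 1 ω})).toReal / (μ {ω | u n < ξ 1 ω}).toReal)
        atTop (nhds (1 - θ * Real.exp (-θ * lam * t))) := by
  intro t ht
  have hstat : IsStrictlyStationary μ ξ := hstat
  set F : ℕ → ℕ → ℝ := fun n k => μ.real {ω | ∀ j, 1 ≤ j → j ≤ k → ξ j ω ≤ u n}
  set Q : ℕ → ℝ := fun n => μ.real {ω | u n < ξ 1 ω}
  have hdiff n k := hstat.measureReal_forall_le_sub_succ hmeas (u n) k
  have hanti : ∀ n, Antitone fun k => F n k - F n (k + 1) := fun n k l hkl => by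
    simp only [F, hdiff]
    exact measureReal_mono (inter_subset_inter_left _ fun ω hω j h2j hjl => hω j h2j (by omega))
  have hφ : HasDerivAt (fun s => Real.exp (-θ * lam * s))
      (Real.exp (-θ * lam * t) * (-θ * lam)) t := by
    simpa using ((hasDerivAt_id' t).const_mul (-θ * lam)).exp
  have hD := (tendsto_mul_sub_floor_of_hasDerivAt hanti hmax ht hφ).div htail hlam.ne'
  rw [show -(Real.exp (-θ * lam * t) * (-θ * lam)) / lam = θ * Real.exp (-θ * lam * t) by
    field_simp] at hD
  have hQ_ne : ∀ᶠ n : ℕ in atTop, Q n ≠ 0 :=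
    (htail.eventually (lt_mem_nhds hlam)).mono fun n h => right_ne_zero_of_mul h.ne'
  refine (tendsto_const_nhds.sub hD).congr' ?_
  filter_upwards [hQ_ne, eventually_floor_mul_pos ht, eventually_ne_atTop 0] with n hQ hm hn
  have hstep := hdiff n (⌊(n : ℝ) * t⌋₊ - 1)
  rw [Nat.sub_add_cancel hm] at hstep
  change 1 - _ / (n * Q n) = μ.real _ / Q n
  rw [mul_div_mul_left _ _ (Nat.cast_ne_zero.mpr hn), one_sub_div hQ,
    measureReal_exists_lt_inter hmeas, ← hstep]

/-- For a strictly stationary sequence `ξ` with `n·P(ξ₁ > u_n) → λ` and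
`P(max_{1≤j≤⌊nt⌋} ξ_j ≤ u_n) → e^{-θλt}` for all `t > 0`, one has
`P(max_{2≤j≤⌊nt⌋} ξ_j > u_n | ξ₁ > u_n) → 1 − θe^{-θλt}` for every `t > 0`. -/
theorem stmt_1 {Ω : Type*} [MeasurableSpace Ω] (μ : Measure Ω) [IsProbabilityMeasure μ]
    (ξ : ℕ → Ω → ℝ) (hmeas : ∀ j, Measurable (ξ j))
    -- strict stationarity: the law of the process is shift invariant
    (hstat : ∀ m : ℕ,
      Measure.map (fun ω => (fun i : ℕ => ξ (i + m) ω)) μ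
        = Measure.map (fun ω => (fun i : ℕ => ξ i ω)) μ)
    (lam θ : ℝ) (hlam : 0 < lam) (hθ : 0 < θ) (u : ℕ → ℝ)
    (htail : Tendsto (fun n : ℕ => (n : ℝ) * (μ {ω | u n < ξ 1 ω}).toReal)
      atTop (nhds lam))
    (hmax : ∀ t : ℝ, 0 < t →
      Tendsto (fun n : ℕ =>
          (μ {ω | ∀ j, 1 ≤ j → j ≤ ⌊(n : ℝ) * t⌋₊ → ξ j ω ≤ u n}).toReal)
        atTop (nhds (Real.exp (-θ * lam * t)))) :
    ∀ t : ℝ, 0 < t →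
      Tendsto (fun n : ℕ =>
          (μ ({ω | ∃ j, 2 ≤ j ∧ j ≤ ⌊(n : ℝ) * t⌋₊ ∧ u n < ξ j ω}
              ∩ {ω | u n < ξ 1 ω})).toReal / (μ {ω | u n < ξ 1 ω}).toReal)
        atTop (nhds (1 - θ * Real.exp (-θ * lam * t))) :=
  stmt_1_general μ ξ hmeas hstat lam θ hlam u htail hmax
end

section
/- Let {Z_j : j ≥ 1} be a strictly stationary sequence of real random vectors such that the maximal correlation coefficients ρ(n) satisfy ∑_{j=0}^∞ ρ(2^j) < ∞. For a > 0 let Z_j(a) = Z_j·1{|Z_j| ≤ a} − E(Z_j·1{|Z_j| ≤ a}) and S_k = ∑_{j=2}^{k+1} Z_j(a). Then there is a constant C₂, depending only on (ρ(n)), such that ‖S_n‖₂ ≤ C₂ √n ‖Z₁(a)‖₂ for every a > 0 and n ≥ 1, where ‖Y‖₂ = √(E⟨Y,Y⟩). -/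
/-!
Work in `L²`, where the truncated and centred variables form a stationary sequence. Split
a block of length at most `2 ^ (r + 1)` into a block `A` of length `2 ^ r`, a gap of about
`h = 2 ^ (r / 4)` terms and a far block `B` of length at most `2 ^ r`. The covariance
inequality gives `‖A + B‖² ≤ (1 + ρ h) (‖A‖² + ‖B‖²)`, stationarity bounds `‖A‖` and `‖B‖`
by the bound at scale `r`, and the gap costs at most `h` single terms. So the bound `u r` at scale `r` obeys
`u (r + 1) ≤ √(2 (1 + ρ h)) u r + h`. Since `∑ ρ (2 ^ j) < ∞`, the product of the factors
`√(1 + ρ (2 ^ (r / 4)))` stays bounded, and `∑ 2 ^ (r / 4) / √2 ^ r < ∞`; hence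
`u r = O(√2 ^ r)`, which is `O(√n)` for `n ≈ 2 ^ r`.
-/

open MeasureTheory ProbabilityTheory
open scoped RealInnerProductSpace

open Finset in
lemma sum_range_comp_div_le_tsum {f : ℕ → ℝ} (hf : ∀ j, 0 ≤ f j) (hs : Summable f) {k : ℕ}
    (hk : 0 < k) (r : ℕ) : ∑ s ∈ range r, f (s / k) ≤ k * ∑' j, f j := by
  classical
  have hfiber (j : ℕ) : #{s ∈ range r | s / k = j} ≤ k :=
    calc #{s ∈ range r | s / k = j} ≤ #(Ico (j * k) (j * k + k)) := by
          refine card_le_card fun s hs => ?_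
          rw [Finset.mem_Ico, ← (mem_filter.mp hs).2]
          exact ⟨Nat.div_mul_le_self s k, Nat.lt_div_mul_add hk⟩
      _ = k := by simp
  rw [sum_comp]
  calc ∑ j ∈ (range r).image (· / k), #{s ∈ range r | s / k = j} • f j
      ≤ ∑ j ∈ (range r).image (· / k), k * f j := by
        gcongr with j
        rw [nsmul_eq_mul]
        gcongr
        · exact hf j
        · exact_mod_cast hfiber j
    _ ≤ k * ∑' j, f j := by
        rw [← mul_sum]
        gcongr
        exact hs.sum_le_tsum _ fun j _ => hf j

noncomputable def dyadicBound (ρ : ℕ → ℝ) : ℕ → ℝ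
  | 0 => 1
  | r + 1 => √(2 * (1 + ρ (2 ^ (r / 4)))) * dyadicBound ρ r + 2 ^ (r / 4)

section dyadicBound

variable {ρ : ℕ → ℝ}

lemma one_le_sqrt_two_mul_one_add (hρ0 : ∀ n, 0 ≤ ρ n) (n : ℕ) : 1 ≤ √(2 * (1 + ρ n)) :=
  Real.one_le_sqrt.mpr (by linarith [hρ0 n])

lemma one_le_dyadicBound (hρ0 : ∀ n, 0 ≤ ρ n) : ∀ r, 1 ≤ dyadicBound ρ r
  | 0 => le_rfl
  | r + 1 => by
    rw [dyadicBound]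
    nlinarith [one_le_dyadicBound hρ0 r, one_le_sqrt_two_mul_one_add hρ0 (2 ^ (r / 4)),
      one_le_pow₀ (M₀ := ℝ) one_le_two (n := r / 4)]

lemma dyadicBound_mono (hρ0 : ∀ n, 0 ≤ ρ n) : Monotone (dyadicBound ρ) :=
  monotone_nat_of_le_succ fun r => by
    rw [dyadicBound]
    nlinarith [one_le_dyadicBound hρ0 r, one_le_sqrt_two_mul_one_add hρ0 (2 ^ (r / 4)),
      one_le_pow₀ (M₀ := ℝ) one_le_two (n := r / 4)]

lemma sqrt_one_add_le_exp {x : ℝ} (hx : 0 ≤ x) : √(1 + x) ≤ Real.exp x := by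
  rw [Real.sqrt_le_left (Real.exp_pos x).le]
  nlinarith [Real.add_one_le_exp x]

open Finset in
lemma dyadicBound_le_exp_mul (hρ0 : ∀ n, 0 ≤ ρ n) (r : ℕ) :
    dyadicBound ρ r ≤ Real.exp (∑ s ∈ range r, ρ (2 ^ (s / 4))) *
      (1 + ∑ s ∈ range r, (2:ℝ) ^ (s / 4) / √2 ^ (s + 1)) * √2 ^ r := by
  induction r with
  | zero => simp [dyadicBound]
  | succ r ih =>
    set h : ℕ := 2 ^ (r / 4)
    set S := ∑ s ∈ range r, ρ (2 ^ (s / 4))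
    set T := ∑ s ∈ range r, (2:ℝ) ^ (s / 4) / √2 ^ (s + 1)
    have hgrowth : √(2 * (1 + ρ h)) ≤ √2 * Real.exp (ρ h) := by
      rw [Real.sqrt_mul zero_le_two]
      gcongr
      exact sqrt_one_add_le_exp (hρ0 h)
    have hexp : 1 ≤ Real.exp (S + ρ h) :=
      Real.one_le_exp (add_nonneg (sum_nonneg fun s _ => hρ0 _) (hρ0 h))
    have hT : 0 ≤ T := sum_nonneg fun s _ => by positivity
    rw [sum_range_succ, sum_range_succ, dyadicBound]
    calc _ ≤ √2 * Real.exp (ρ h) * (Real.exp S * (1 + T) * √2 ^ r)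
          + Real.exp (S + ρ h) * 2 ^ (r / 4) := by
          gcongr
          · exact zero_le_one.trans (one_le_dyadicBound hρ0 r)
          · exact le_mul_of_one_le_left (by positivity) hexp
      _ = Real.exp (S + ρ h) * (1 + (T + (2:ℝ) ^ (r / 4) / √2 ^ (r + 1))) * √2 ^ (r + 1) := by
          rw [Real.exp_add]
          field_simp
          ring

lemma sum_range_pow_div_le (r : ℕ) :
    ∑ s ∈ Finset.range r, (2:ℝ) ^ (s / 4) / √2 ^ (s + 1) ≤ 8 := by
  have hterm (s : ℕ) : (2:ℝ) ^ (s / 4) / √2 ^ (s + 1) ≤ (1 / 2) ^ (s / 4) := by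
    have hfour : √2 ^ 4 = (2:ℝ) * 2 := by
      rw [show 4 = 2 * 2 by rfl, pow_mul, Real.sq_sqrt zero_le_two]; norm_num
    have : (2:ℝ) ^ (s / 4) * 2 ^ (s / 4) ≤ √2 ^ (s + 1) :=
      calc (2:ℝ) ^ (s / 4) * 2 ^ (s / 4) = √2 ^ (4 * (s / 4)) := by rw [pow_mul, hfour, mul_pow]
        _ ≤ √2 ^ (s + 1) := pow_le_pow_right₀ (Real.one_le_sqrt.mpr one_le_two) (by omega)
    rw [div_pow, one_pow, div_le_div_iff₀ (by positivity) (by positivity), one_mul]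
    exact this
  calc ∑ s ∈ Finset.range r, (2:ℝ) ^ (s / 4) / √2 ^ (s + 1)
      ≤ ∑ s ∈ Finset.range r, (1 / 2 : ℝ) ^ (s / 4) := Finset.sum_le_sum fun s _ => hterm s
    _ ≤ (4 : ℕ) * ∑' j, (1 / 2 : ℝ) ^ j :=
        sum_range_comp_div_le_tsum (fun j => by positivity) summable_geometric_two four_pos r
    _ = 8 := by rw [tsum_geometric_two]; norm_num

lemma dyadicBound_le (hρ0 : ∀ n, 0 ≤ ρ n) (hsum : Summable fun j => ρ (2 ^ j)) (r : ℕ) :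
    dyadicBound ρ r ≤ 9 * Real.exp (4 * ∑' j, ρ (2 ^ j)) * √2 ^ r := by
  refine (dyadicBound_le_exp_mul hρ0 r).trans ?_
  have hS := sum_range_comp_div_le_tsum (fun j => hρ0 (2 ^ j)) hsum four_pos r
  have hT := sum_range_pow_div_le r
  push_cast at hS
  rw [mul_comm 9]
  gcongr
  linarith

end dyadicBound

section blockSum

def blockSum {M : Type*} [AddCommMonoid M] (W : ℕ → M) (s n : ℕ) : M :=
  ∑ i ∈ Finset.range n, W (s + i)

lemma blockSum_add {M : Type*} [AddCommMonoid M] (W : ℕ → M) (s a b : ℕ) :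
    blockSum W s (a + b) = blockSum W s a + blockSum W (s + a) b := by
  simp only [blockSum, Finset.sum_range_add, add_assoc]

variable {E : Type*} [NormedAddCommGroup E]

lemma norm_blockSum_le {W : ℕ → E} (hstat : ∀ s n, ‖blockSum W s n‖ = ‖blockSum W 0 n‖)
    (s n : ℕ) : ‖blockSum W s n‖ ≤ n * ‖W 0‖ := by
  have hW (j : ℕ) : ‖W j‖ = ‖W 0‖ := by simpa [blockSum] using hstat j 1
  calc ‖blockSum W s n‖ ≤ ∑ i ∈ Finset.range n, ‖W (s + i)‖ := norm_sum_le _ _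
    _ = n * ‖W 0‖ := by simp [hW]

variable [InnerProductSpace ℝ E]

lemma norm_add_le_of_inner_le {x y : E} {c U : ℝ} (hc : 0 ≤ c)
    (hxy : ⟪x, y⟫ ≤ c * (‖x‖ * ‖y‖)) (hx : ‖x‖ ≤ U) (hy : ‖y‖ ≤ U) :
    ‖x + y‖ ≤ √(2 * (1 + c)) * U := by
  have hU : 0 ≤ U := (norm_nonneg x).trans hx
  rw [← pow_le_pow_iff_left₀ (norm_nonneg _) (by positivity) two_ne_zero, mul_pow,
    Real.sq_sqrt (by positivity), norm_add_sq_real]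
  have hxy' : 2 * (‖x‖ * ‖y‖) ≤ ‖x‖ ^ 2 + ‖y‖ ^ 2 := by nlinarith [sq_nonneg (‖x‖ - ‖y‖)]
  have hx2 : ‖x‖ ^ 2 ≤ U ^ 2 := pow_le_pow_left₀ (norm_nonneg x) hx 2
  have hy2 : ‖y‖ ^ 2 ≤ U ^ 2 := pow_le_pow_left₀ (norm_nonneg y) hy 2
  nlinarith [mul_le_mul_of_nonneg_left hxy' hc]

variable {ρ : ℕ → ℝ} {W : ℕ → E}

lemma norm_blockSum_le_dyadicBound (hρ0 : ∀ n, 0 ≤ ρ n)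
    (hstat : ∀ s n, ‖blockSum W s n‖ = ‖blockSum W 0 n‖)
    (hcov : ∀ k g m, ⟪blockSum W 0 k, blockSum W (k + g) m⟫ ≤
      ρ (g + 1) * (‖blockSum W 0 k‖ * ‖blockSum W (k + g) m‖)) :
    ∀ r n, n ≤ 2 ^ r → ‖blockSum W 0 n‖ ≤ dyadicBound ρ r * ‖W 0‖ := by
  intro r
  induction r with
  | zero =>
    intro n hn
    interval_cases n <;> simp [blockSum, dyadicBound]
  | succ r ih =>
    intro n hn
    by_cases hle : n ≤ 2 ^ r
    · exact (ih n hle).trans (by gcongr; exact dyadicBound_mono hρ0 r.le_succ)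
    set h := 2 ^ (r / 4) with hh
    have hh1 : 1 ≤ h := Nat.one_le_two_pow
    set g := min (h - 1) (n - 2 ^ r)
    set m := n - 2 ^ r - g
    have hsplit : n = 2 ^ r + g + m := by omega
    set A := blockSum W 0 (2 ^ r)
    set M := blockSum W (2 ^ r) g
    set B := blockSum W (2 ^ r + g) m
    have hA : ‖A‖ ≤ dyadicBound ρ r * ‖W 0‖ := ih _ le_rfl
    have hB : ‖B‖ ≤ dyadicBound ρ r * ‖W 0‖ := (hstat _ _).trans_le (ih m (by omega))
    have hM : ‖M‖ ≤ h * ‖W 0‖ :=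
      (norm_blockSum_le hstat _ _).trans (by gcongr; exact_mod_cast (by omega : g ≤ h))
    have hAB : ⟪A, B⟫ ≤ ρ h * (‖A‖ * ‖B‖) := by
      rcases (show m = 0 ∨ g + 1 = h by omega) with hm | hg
      · simp [B, hm, blockSum]
      · rw [← hg]; exact hcov _ _ _
    have hdecomp : blockSum W 0 n = A + B + M := by
      rw [hsplit, blockSum_add, blockSum_add, zero_add, zero_add, add_right_comm]
    calc ‖blockSum W 0 n‖ = ‖(A + B) + M‖ := by rw [hdecomp]
      _ ≤ ‖A + B‖ + ‖M‖ := norm_add_le _ _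
      _ ≤ √(2 * (1 + ρ h)) * (dyadicBound ρ r * ‖W 0‖) + h * ‖W 0‖ :=
          add_le_add (norm_add_le_of_inner_le (hρ0 h) hAB hA hB) hM
      _ = dyadicBound ρ (r + 1) * ‖W 0‖ := by rw [dyadicBound]; push_cast [hh]; ring

lemma norm_blockSum_le_sqrt (hρ0 : ∀ n, 0 ≤ ρ n) (hsum : Summable fun j => ρ (2 ^ j))
    (hstat : ∀ s n, ‖blockSum W s n‖ = ‖blockSum W 0 n‖)
    (hcov : ∀ k g m, ⟪blockSum W 0 k, blockSum W (k + g) m⟫ ≤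
      ρ (g + 1) * (‖blockSum W 0 k‖ * ‖blockSum W (k + g) m‖)) {n : ℕ} (hn : 1 ≤ n) :
    ‖blockSum W 0 n‖ ≤ 9 * Real.exp (4 * ∑' j, ρ (2 ^ j)) * √2 * √n * ‖W 0‖ := by
  set r := Nat.log 2 n + 1
  have hnr : n ≤ 2 ^ r := (Nat.lt_pow_succ_log_self one_lt_two n).le
  have hrn : (2:ℝ) ^ r ≤ 2 * n := by
    have := Nat.pow_log_le_self 2 (x := n) (by omega)
    rw [pow_succ]; exact_mod_cast (by omega : 2 ^ Nat.log 2 n * 2 ≤ 2 * n)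
  have hsqrt : √2 ^ r ≤ √2 * √n := by
    rw [← pow_le_pow_iff_left₀ (by positivity) (by positivity) two_ne_zero, ← pow_mul,
      mul_comm, pow_mul, mul_pow, Real.sq_sqrt zero_le_two, Real.sq_sqrt n.cast_nonneg]
    exact hrn
  calc ‖blockSum W 0 n‖ ≤ dyadicBound ρ r * ‖W 0‖ :=
        norm_blockSum_le_dyadicBound hρ0 hstat hcov r n hnr
    _ ≤ 9 * Real.exp (4 * ∑' j, ρ (2 ^ j)) * √2 ^ r * ‖W 0‖ := by
        gcongr; exact dyadicBound_le hρ0 hsum r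
    _ ≤ 9 * Real.exp (4 * ∑' j, ρ (2 ^ j)) * (√2 * √n) * ‖W 0‖ := by gcongr
    _ = _ := by ring

end blockSum

section Lp

variable {Ω F : Type*} [MeasurableSpace Ω] {μ : Measure Ω} [NormedAddCommGroup F]

lemma MeasureTheory.MemLp.toLp_finsetSum {ι : Type*} {p : ENNReal} [Fact (1 ≤ p)]
    {f : ι → Ω → F} (hf : ∀ i, MemLp (f i) p μ) (s : Finset ι) :
    ∑ i ∈ s, (hf i).toLp (f i) = (memLp_finsetSum' s fun i _ => hf i).toLp (∑ i ∈ s, f i) := by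
  classical
  induction s using Finset.induction_on with
  | empty => simp
  | insert i s hi ih => simp [Finset.sum_insert hi, ih, ← MemLp.toLp_add]

variable [InnerProductSpace ℝ F]

lemma MeasureTheory.MemLp.inner_toLp {f g : Ω → F} (hf : MemLp f 2 μ) (hg : MemLp g 2 μ) :
    ⟪hf.toLp f, hg.toLp g⟫ = ∫ ω, ⟪f ω, g ω⟫ ∂μ := by
  rw [L2.inner_def]
  refine integral_congr_ae ?_
  filter_upwards [hf.coeFn_toLp, hg.coeFn_toLp] with ω hfω hgω
  rw [hfω, hgω]

lemma MeasureTheory.MemLp.norm_toLp_eq_sqrt {f : Ω → F} (hf : MemLp f 2 μ) :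
    ‖hf.toLp f‖ = √(∫ ω, ‖f ω‖ ^ 2 ∂μ) := by
  rw [← Real.sqrt_sq (norm_nonneg _), ← real_inner_self_eq_norm_sq, hf.inner_toLp]
  simp_rw [real_inner_self_eq_norm_sq]

end Lp

section correlation

variable {Ω : Type*}

def MaximalCorrelationLE {m0 : MeasurableSpace Ω} (μ : Measure Ω) (m₁ m₂ : MeasurableSpace Ω)
    (c : ℝ) : Prop :=
  ∀ f g : Ω → ℝ, Measurable[m₁] f → Measurable[m₂] g →
    Integrable (fun ω => (f ω) ^ 2) μ → Integrable (fun ω => (g ω) ^ 2) μ →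
    |(∫ ω, f ω * g ω ∂μ) - (∫ ω, f ω ∂μ) * (∫ ω, g ω ∂μ)| ≤
      c * √(∫ ω, (f ω - ∫ ω', f ω' ∂μ) ^ 2 ∂μ) * √(∫ ω, (g ω - ∫ ω', g ω' ∂μ) ^ 2 ∂μ)

variable {m₁ m₂ m0 : MeasurableSpace Ω} {μ : Measure Ω} {c : ℝ}

lemma MaximalCorrelationLE.integral_mul_le (h : MaximalCorrelationLE μ m₁ m₂ c) {f g : Ω → ℝ}
    (hf : Measurable[m₁] f) (hg : Measurable[m₂] g) (hf2 : MemLp f 2 μ) (hg2 : MemLp g 2 μ)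
    (hf0 : ∫ ω, f ω ∂μ = 0) (hg0 : ∫ ω, g ω ∂μ = 0) :
    ∫ ω, f ω * g ω ∂μ ≤ c * (√(∫ ω, f ω ^ 2 ∂μ) * √(∫ ω, g ω ^ 2 ∂μ)) := by
  have := h f g hf hg hf2.integrable_sq hg2.integrable_sq
  simp only [hf0, hg0, mul_zero, sub_zero] at this
  rw [← mul_assoc]
  exact (le_abs_self _).trans this

lemma integral_norm_sq_euclideanSpace {ι : Type*} [Fintype ι] {A : Ω → EuclideanSpace ℝ ι}
    (hA : MemLp A 2 μ) : ∫ ω, ‖A ω‖ ^ 2 ∂μ = ∑ i, ∫ ω, A ω i ^ 2 ∂μ := by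
  simp_rw [EuclideanSpace.real_norm_sq_eq]
  exact integral_finsetSum _ fun i _ =>
    ((EuclideanSpace.proj (𝕜 := ℝ) i).comp_memLp' hA).integrable_sq

lemma MaximalCorrelationLE.integral_inner_le [IsFiniteMeasure μ]
    (h : MaximalCorrelationLE μ m₁ m₂ c) (hc : 0 ≤ c) {ι : Type*} [Fintype ι]
    {A B : Ω → EuclideanSpace ℝ ι} (hA : Measurable[m₁] A) (hB : Measurable[m₂] B)
    (hA2 : MemLp A 2 μ) (hB2 : MemLp B 2 μ) (hA0 : ∫ ω, A ω ∂μ = 0) (hB0 : ∫ ω, B ω ∂μ = 0) :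
    ∫ ω, ⟪A ω, B ω⟫ ∂μ ≤ c * (√(∫ ω, ‖A ω‖ ^ 2 ∂μ) * √(∫ ω, ‖B ω‖ ^ 2 ∂μ)) := by
  have hcoord2 {F : Ω → EuclideanSpace ℝ ι} (hF2 : MemLp F 2 μ) (i : ι) :
      MemLp (fun ω => F ω i) 2 μ :=
    (EuclideanSpace.proj (𝕜 := ℝ) i).comp_memLp' hF2
  have hcoord0 {F : Ω → EuclideanSpace ℝ ι} (hF2 : MemLp F 2 μ) (hF0 : ∫ ω, F ω ∂μ = 0)
      (i : ι) : ∫ ω, F ω i ∂μ = 0 := by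
    have := (EuclideanSpace.proj (𝕜 := ℝ) i).integral_comp_comm (hF2.integrable one_le_two)
    simp_all
  calc ∫ ω, ⟪A ω, B ω⟫ ∂μ = ∫ ω, ∑ i, A ω i * B ω i ∂μ := by
        simp [PiLp.inner_apply, mul_comm]
    _ = ∑ i, ∫ ω, A ω i * B ω i ∂μ :=
        integral_finsetSum _ fun i _ => (hcoord2 hA2 i).integrable_mul (hcoord2 hB2 i)
    _ ≤ ∑ i, c * (√(∫ ω, A ω i ^ 2 ∂μ) * √(∫ ω, B ω i ^ 2 ∂μ)) :=
        Finset.sum_le_sum fun i _ => h.integral_mul_le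
          ((EuclideanSpace.proj (𝕜 := ℝ) i).continuous.measurable.comp hA)
          ((EuclideanSpace.proj (𝕜 := ℝ) i).continuous.measurable.comp hB)
          (hcoord2 hA2 i) (hcoord2 hB2 i) (hcoord0 hA2 hA0 i) (hcoord0 hB2 hB0 i)
    _ ≤ c * (√(∑ i, ∫ ω, A ω i ^ 2 ∂μ) * √(∑ i, ∫ ω, B ω i ^ 2 ∂μ)) := by
        rw [← Finset.mul_sum]
        gcongr
        exact Real.sum_sqrt_mul_sqrt_le _ (fun i => integral_nonneg fun ω => sq_nonneg _)
          (fun i => integral_nonneg fun ω => sq_nonneg _)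
    _ = c * (√(∫ ω, ‖A ω‖ ^ 2 ∂μ) * √(∫ ω, ‖B ω‖ ^ 2 ∂μ)) := by
        rw [integral_norm_sq_euclideanSpace hA2, integral_norm_sq_euclideanSpace hB2]

end correlation

section stationary

variable {Ω E : Type*} [MeasurableSpace E] {Z : ℕ → Ω → E}

lemma measurable_biSup_comap {S : Set ℕ} {j : ℕ} (hj : j ∈ S) :
    Measurable[⨆ i ∈ S, MeasurableSpace.comap (Z i) inferInstance] (Z j) :=
  Measurable.of_comap_le (le_biSup (fun i => MeasurableSpace.comap (Z i) inferInstance) hj)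

variable [MeasurableSpace Ω] {μ : Measure Ω}

lemma identDistrib_apply_shift
    (hstat : ∀ m, IdentDistrib (fun ω i => Z (i + m) ω) (fun ω i => Z i ω) μ μ) (j : ℕ) :
    IdentDistrib (Z j) (Z 0) μ μ := by
  simpa [Function.comp_def] using (hstat j).comp (measurable_pi_apply 0)

lemma integral_comp_shift
    (hstat : ∀ m, IdentDistrib (fun ω i => Z (i + m) ω) (fun ω i => Z i ω) μ μ)
    {F : Type*} [NormedAddCommGroup F] [NormedSpace ℝ F] [MeasurableSpace F] [BorelSpace F]
    {G : (ℕ → E) → F} (hG : Measurable G) (m : ℕ) :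
    ∫ ω, G (fun i => Z (i + m) ω) ∂μ = ∫ ω, G (fun i => Z i ω) ∂μ :=
  ((hstat m).comp hG).integral_eq

end stationary

section partialSums

variable {Ω E : Type*} [MeasurableSpace E] {Z : ℕ → Ω → E}

lemma measurable_blockSum_comp_biSup {F : Type*} [NormedAddCommGroup F] [MeasurableSpace F]
    [BorelSpace F] [SecondCountableTopology F] {ψ : E → F} (hψ : Measurable ψ)
    {S : Set ℕ} {t k : ℕ} (hS : ∀ i < k, t + i ∈ S) :
    Measurable[⨆ i ∈ S, MeasurableSpace.comap (Z i) inferInstance]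
      (blockSum (fun j ω => ψ (Z j ω)) t k) := by
  rw [blockSum, Finset.sum_fn]
  exact Finset.measurable_sum _ fun i hi =>
    hψ.comp (measurable_biSup_comap (hS i (Finset.mem_range.mp hi)))

variable [MeasurableSpace Ω] {μ : Measure Ω}

lemma integral_norm_blockSum_comp_sq_eq {F : Type*} [NormedAddCommGroup F] [MeasurableSpace F]
    [BorelSpace F] [SecondCountableTopology F] {ψ : E → F}
    (hstat : ∀ m, IdentDistrib (fun ω i => Z (i + m) ω) (fun ω i => Z i ω) μ μ)
    (hψ : Measurable ψ) (t k : ℕ) :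
    ∫ ω, ‖blockSum (fun j ω => ψ (Z j ω)) t k ω‖ ^ 2 ∂μ =
      ∫ ω, ‖blockSum (fun j ω => ψ (Z j ω)) 0 k ω‖ ^ 2 ∂μ := by
  have hG : Measurable fun z : ℕ → E => ‖∑ i ∈ Finset.range k, ψ (z i)‖ ^ 2 :=
    (Finset.measurable_sum _ fun i _ => hψ.comp (measurable_pi_apply i)).norm.pow_const 2
  simpa [blockSum, Finset.sum_apply, add_comm] using integral_comp_shift hstat hG t

variable {ι : Type*} [Fintype ι] {ρ : ℕ → ℝ}

theorem sqrt_integral_norm_sum_sq_le [IsFiniteMeasure μ] {ψ : E → EuclideanSpace ℝ ι}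
    (hstat : ∀ m, IdentDistrib (fun ω i => Z (i + m) ω) (fun ω i => Z i ω) μ μ)
    (hψ : Measurable ψ) (hψ2 : MemLp (fun ω => ψ (Z 0 ω)) 2 μ) (hψ0 : ∫ ω, ψ (Z 0 ω) ∂μ = 0)
    (hρ0 : ∀ n, 0 ≤ ρ n) (hsum : Summable fun j => ρ (2 ^ j))
    (hcorr : ∀ n k, MaximalCorrelationLE μ
      (⨆ i ∈ Set.Icc 1 k, MeasurableSpace.comap (Z i) inferInstance)
      (⨆ i ∈ Set.Ici (n + k), MeasurableSpace.comap (Z i) inferInstance) (ρ n))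
    (s : ℕ) {n : ℕ} (hn : 1 ≤ n) :
    √(∫ ω, ‖∑ i ∈ Finset.range n, ψ (Z (s + i) ω)‖ ^ 2 ∂μ) ≤
      9 * Real.exp (4 * ∑' j, ρ (2 ^ j)) * √2 * √n * √(∫ ω, ‖ψ (Z 0 ω)‖ ^ 2 ∂μ) := by
  set X : ℕ → Ω → EuclideanSpace ℝ ι := fun j ω => ψ (Z j ω)
  have hX (j : ℕ) : IdentDistrib (X j) (X 0) μ μ := (identDistrib_apply_shift hstat j).comp hψ
  have hX2 (j : ℕ) : MemLp (X j) 2 μ := (hX j).memLp_iff.mpr hψ2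
  have hS2 (t k : ℕ) : MemLp (blockSum X t k) 2 μ := memLp_finsetSum' _ fun i _ => hX2 _
  have hS0 (t k : ℕ) : ∫ ω, blockSum X t k ω ∂μ = 0 := by
    simp only [blockSum, Finset.sum_apply]
    rw [integral_finsetSum _ fun i _ => (hX2 _).integrable one_le_two]
    exact Finset.sum_eq_zero fun i _ => (hX _).integral_eq.trans hψ0
  have hSstat (t k : ℕ) :
      ∫ ω, ‖blockSum X t k ω‖ ^ 2 ∂μ = ∫ ω, ‖blockSum X 0 k ω‖ ^ 2 ∂μ :=
    integral_norm_blockSum_comp_sq_eq hstat hψ t k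
  -- The past σ-algebras start at `Z 1`, hence the shift by one.
  set W : ℕ → Lp (EuclideanSpace ℝ ι) 2 μ := fun j => (hX2 (1 + j)).toLp (X (1 + j))
  have hW (t k : ℕ) : blockSum W t k = (hS2 (1 + t) k).toLp (blockSum X (1 + t) k) := by
    simp only [blockSum, W, MemLp.toLp_finsetSum, add_assoc]
  have hnormW (t k : ℕ) : ‖blockSum W t k‖ = √(∫ ω, ‖blockSum X 0 k ω‖ ^ 2 ∂μ) := by
    rw [hW, MemLp.norm_toLp_eq_sqrt, hSstat]
  have hcovW (k g m : ℕ) : ⟪blockSum W 0 k, blockSum W (k + g) m⟫ ≤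
      ρ (g + 1) * (‖blockSum W 0 k‖ * ‖blockSum W (k + g) m‖) := by
    rw [hW, hW, MemLp.inner_toLp, MemLp.norm_toLp_eq_sqrt, MemLp.norm_toLp_eq_sqrt]
    refine (hcorr (g + 1) k).integral_inner_le (hρ0 _) ?_ ?_ (hS2 _ _) (hS2 _ _)
      (hS0 _ _) (hS0 _ _)
    · exact measurable_blockSum_comp_biSup hψ fun i hi => Set.mem_Icc.mpr (by omega)
    · exact measurable_blockSum_comp_biSup hψ fun i _ => Set.mem_Ici.mpr (by omega)
  have hW0 : ‖W 0‖ = √(∫ ω, ‖ψ (Z 0 ω)‖ ^ 2 ∂μ) := by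
    simpa [blockSum, X] using hnormW 0 1
  calc √(∫ ω, ‖∑ i ∈ Finset.range n, ψ (Z (s + i) ω)‖ ^ 2 ∂μ) = ‖blockSum W 0 n‖ := by
        rw [hnormW, ← hSstat s]
        simp [blockSum, Finset.sum_apply, X]
    _ ≤ _ := by
        rw [← hW0]
        exact norm_blockSum_le_sqrt hρ0 hsum (fun t k => by rw [hnormW, hnormW]) hcovW hn

theorem sqrt_integral_norm_sum_sub_integral_sq_le [IsProbabilityMeasure μ]
    {φ : E → EuclideanSpace ℝ ι}
    (hstat : ∀ m, IdentDistrib (fun ω i => Z (i + m) ω) (fun ω i => Z i ω) μ μ)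
    (hφ : Measurable φ) (hφ2 : MemLp (fun ω => φ (Z 0 ω)) 2 μ)
    (hρ0 : ∀ n, 0 ≤ ρ n) (hsum : Summable fun j => ρ (2 ^ j))
    (hcorr : ∀ n k, MaximalCorrelationLE μ
      (⨆ i ∈ Set.Icc 1 k, MeasurableSpace.comap (Z i) inferInstance)
      (⨆ i ∈ Set.Ici (n + k), MeasurableSpace.comap (Z i) inferInstance) (ρ n))
    (s j : ℕ) {n : ℕ} (hn : 1 ≤ n) :
    √(∫ ω, ‖∑ i ∈ Finset.range n,
        (φ (Z (s + i) ω) - ∫ ω', φ (Z (s + i) ω') ∂μ)‖ ^ 2 ∂μ) ≤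
      9 * Real.exp (4 * ∑' j, ρ (2 ^ j)) * √2 * √n *
        √(∫ ω, ‖φ (Z j ω) - ∫ ω', φ (Z j ω') ∂μ‖ ^ 2 ∂μ) := by
  set c := ∫ ω, φ (Z 0 ω) ∂μ
  have hc (i : ℕ) : ∫ ω, φ (Z i ω) ∂μ = c :=
    ((identDistrib_apply_shift hstat i).comp hφ).integral_eq
  have hψ : Measurable fun y => φ y - c := hφ.sub measurable_const
  have hψ0 : ∫ ω, φ (Z 0 ω) - c ∂μ = 0 := by
    rw [integral_sub (hφ2.integrable one_le_two) (integrable_const c)]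
    simp [c]
  have hψj : ∫ ω, ‖φ (Z j ω) - c‖ ^ 2 ∂μ = ∫ ω, ‖φ (Z 0 ω) - c‖ ^ 2 ∂μ :=
    ((identDistrib_apply_shift hstat j).comp (hψ.norm.pow_const 2)).integral_eq
  simp_rw [hc, hψj]
  exact sqrt_integral_norm_sum_sq_le hstat hψ (hφ2.sub (memLp_const c)) hψ0 hρ0 hsum hcorr s hn

end partialSums

lemma norm_indicator_norm_le_le {F : Type*} [NormedAddCommGroup F] {a : ℝ} (ha : 0 ≤ a)
    (y : F) :
    ‖{y : F | ‖y‖ ≤ a}.indicator id y‖ ≤ a := by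
  by_cases hy : ‖y‖ ≤ a
  · simp [hy]
  · simp [hy, ha]

theorem stmt_13_general {Ω : Type*} [m0 : MeasurableSpace Ω] (μ : Measure Ω) [IsProbabilityMeasure μ]
    {d : ℕ} (Z : ℕ → Ω → EuclideanSpace ℝ (Fin d)) (hmeas : ∀ j, Measurable (Z j))
    -- strict stationarity: the law of the process is shift invariant
    (hstat : ∀ m : ℕ,
      Measure.map (fun ω => (fun i : ℕ => Z (i + m) ω)) μ
        = Measure.map (fun ω => (fun i : ℕ => Z i ω)) μ)
    (ρ : ℕ → ℝ) (hρ0 : ∀ n, 0 ≤ ρ n)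
    -- `ρ n` dominates the maximal correlation between past and future
    (hcorr : ∀ n k : ℕ, ∀ f g : Ω → ℝ,
      Measurable[⨆ i ∈ Set.Icc 1 k, MeasurableSpace.comap (Z i) inferInstance] f →
      Measurable[⨆ i ∈ Set.Ici (n + k), MeasurableSpace.comap (Z i) inferInstance] g →
      Integrable (fun ω => (f ω) ^ 2) μ → Integrable (fun ω => (g ω) ^ 2) μ →
      |(∫ ω, f ω * g ω ∂μ) - (∫ ω, f ω ∂μ) * (∫ ω, g ω ∂μ)| ≤
        ρ n * Real.sqrt (∫ ω, (f ω - ∫ ω', f ω' ∂μ) ^ 2 ∂μ)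
          * Real.sqrt (∫ ω, (g ω - ∫ ω', g ω' ∂μ) ^ 2 ∂μ))
    (hsum : Summable (fun j : ℕ => ρ (2 ^ j))) :
    ∃ C₂ : ℝ, ∀ a : ℝ, 0 < a → ∀ n : ℕ, 1 ≤ n →
      Real.sqrt (∫ ω, ‖∑ j ∈ Finset.Icc 2 (n + 1),
          (Set.indicator {ω' | ‖Z j ω'‖ ≤ a} (Z j) ω
            - ∫ ω', Set.indicator {ω'' | ‖Z j ω''‖ ≤ a} (Z j) ω' ∂μ)‖ ^ 2 ∂μ) ≤
        C₂ * Real.sqrt n *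
          Real.sqrt (∫ ω, ‖Set.indicator {ω' | ‖Z 1 ω'‖ ≤ a} (Z 1) ω
            - ∫ ω', Set.indicator {ω'' | ‖Z 1 ω''‖ ≤ a} (Z 1) ω' ∂μ‖ ^ 2 ∂μ) := by
  refine ⟨9 * Real.exp (4 * ∑' j, ρ (2 ^ j)) * √2, fun a ha n hn => ?_⟩
  have hstat' (m : ℕ) : IdentDistrib (fun ω i => Z (i + m) ω) (fun ω i => Z i ω) μ μ :=
    ⟨(measurable_pi_lambda _ fun i => hmeas _).aemeasurable,
      (measurable_pi_lambda _ hmeas).aemeasurable, hstat m⟩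
  set φ : EuclideanSpace ℝ (Fin d) → EuclideanSpace ℝ (Fin d) := {y | ‖y‖ ≤ a}.indicator id
  have hφ : Measurable φ :=
    measurable_id.indicator (isClosed_le continuous_norm continuous_const).measurableSet
  have hφ2 : MemLp (fun ω => φ (Z 0 ω)) 2 μ :=
    MemLp.of_bound (hφ.comp (hmeas 0)).aestronglyMeasurable a
      (ae_of_all _ fun ω => norm_indicator_norm_le_le ha.le _)
  have hIcc (f : ℕ → EuclideanSpace ℝ (Fin d)) :
      ∑ j ∈ Finset.Icc 2 (n + 1), f j = ∑ i ∈ Finset.range n, f (2 + i) := by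
    rw [← Finset.Ico_add_one_right_eq_Icc, Finset.sum_Ico_eq_sum_range]
    simp
  simp_rw [hIcc]
  exact sqrt_integral_norm_sum_sub_integral_sq_le hstat' hφ hφ2 hρ0 hsum hcorr 2 1 hn

/-- Under `∑_j ρ(2^j) < ∞` for the maximal correlation coefficients of a strictly
stationary sequence, the truncated centered partial sums satisfy
`‖S_n‖₂ ≤ C₂ √n ‖Z₁(a)‖₂` for all `a > 0` and `n ≥ 1`, where
`Z_j(a) = Z_j·1{|Z_j| ≤ a} − E(Z_j·1{|Z_j| ≤ a})` and `S_k = ∑_{j=2}^{k+1} Z_j(a)`. -/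
theorem stmt_13 {Ω : Type*} [m0 : MeasurableSpace Ω] (μ : Measure Ω) [IsProbabilityMeasure μ]
    {d : ℕ} (Z : ℕ → Ω → EuclideanSpace ℝ (Fin d)) (hmeas : ∀ j, Measurable (Z j))
    -- strict stationarity: the law of the process is shift invariant
    (hstat : ∀ m : ℕ,
      Measure.map (fun ω => (fun i : ℕ => Z (i + m) ω)) μ
        = Measure.map (fun ω => (fun i : ℕ => Z i ω)) μ)
    (ρ : ℕ → ℝ) (hρ0 : ∀ n, 0 ≤ ρ n) (hρmono : ∀ m n : ℕ, m ≤ n → ρ n ≤ ρ m)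
    -- `ρ n` dominates the maximal correlation between past and future
    (hcorr : ∀ n k : ℕ, ∀ f g : Ω → ℝ,
      Measurable[⨆ i ∈ Set.Icc 1 k, MeasurableSpace.comap (Z i) inferInstance] f →
      Measurable[⨆ i ∈ Set.Ici (n + k), MeasurableSpace.comap (Z i) inferInstance] g →
      Integrable (fun ω => (f ω) ^ 2) μ → Integrable (fun ω => (g ω) ^ 2) μ →
      |(∫ ω, f ω * g ω ∂μ) - (∫ ω, f ω ∂μ) * (∫ ω, g ω ∂μ)| ≤
        ρ n * Real.sqrt (∫ ω, (f ω - ∫ ω', f ω' ∂μ) ^ 2 ∂μ)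
          * Real.sqrt (∫ ω, (g ω - ∫ ω', g ω' ∂μ) ^ 2 ∂μ))
    (hsum : Summable (fun j : ℕ => ρ (2 ^ j))) :
    ∃ C₂ : ℝ, ∀ a : ℝ, 0 < a → ∀ n : ℕ, 1 ≤ n →
      Real.sqrt (∫ ω, ‖∑ j ∈ Finset.Icc 2 (n + 1),
          (Set.indicator {ω' | ‖Z j ω'‖ ≤ a} (Z j) ω
            - ∫ ω', Set.indicator {ω'' | ‖Z j ω''‖ ≤ a} (Z j) ω' ∂μ)‖ ^ 2 ∂μ) ≤
        C₂ * Real.sqrt n *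
          Real.sqrt (∫ ω, ‖Set.indicator {ω' | ‖Z 1 ω'‖ ≤ a} (Z 1) ω
            - ∫ ω', Set.indicator {ω'' | ‖Z 1 ω''‖ ≤ a} (Z 1) ω' ∂μ‖ ^ 2 ∂μ) :=
  stmt_13_general (m0 := m0) μ Z hmeas hstat ρ hρ0 hcorr hsum
end

section
/- Let X be an ℝ^d-valued random vector, F a σ-algebra, and S an ℝ^d-valued random vector with ‖S‖₂ < ∞. Suppose that for all square-integrable real f measurable with respect to σ(X) and g measurable with respect to σ(S), |Corr(f,g)| ≤ ρ. Then ‖E(S | σ(X))‖₂ ≤ ρ‖S‖₂ whenever E S = 0, where ‖Y‖₂ = √(E⟨Y,Y⟩). -/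
/-!
For each coordinate `i`, the function `T = E(Sᵢ | σ(X))` is `σ(X)`-measurable with mean zero, and
the pull-out property gives `E[T Sᵢ] = E[T²]`. The correlation bound applied to the pair `(T, Sᵢ)`
therefore reads `E[T²] ≤ ρ √(E[T²]) √(E[Sᵢ²])`, i.e. `E[T²] ≤ ρ² E[Sᵢ²]`; summing over the
coordinates gives `‖E(S | σ(X))‖₂² ≤ ρ² ‖S‖₂²`.
-/

open MeasureTheory

def MaxCorrLE {Ω : Type*} {m₀ : MeasurableSpace Ω} (μ : Measure[m₀] Ω)
    (m₁ m₂ : MeasurableSpace Ω) (ρ : ℝ) : Prop :=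
  ∀ f g : Ω → ℝ, Measurable[m₁] f → Measurable[m₂] g →
    Integrable (fun ω => (f ω) ^ 2) μ → Integrable (fun ω => (g ω) ^ 2) μ →
    |(∫ ω, f ω * g ω ∂μ) - (∫ ω, f ω ∂μ) * (∫ ω, g ω ∂μ)| ≤
      ρ * √(∫ ω, (f ω - ∫ ω', f ω' ∂μ) ^ 2 ∂μ) * √(∫ ω, (g ω - ∫ ω', g ω' ∂μ) ^ 2 ∂μ)

theorem le_sq_mul_of_le_mul_sqrt_mul_sqrt {a b ρ : ℝ} (ha : 0 ≤ a) (hb : 0 ≤ b)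
    (h : a ≤ ρ * √a * √b) : a ≤ ρ ^ 2 * b := by
  nlinarith [Real.sq_sqrt ha, Real.sq_sqrt hb, Real.sqrt_nonneg a, Real.sqrt_nonneg b,
    sq_nonneg (√a - ρ * √b)]

section CondExp

variable {Ω : Type*} {m m' m₀ : MeasurableSpace Ω} {μ : Measure[m₀] Ω} {ι : Type*} [Fintype ι]

theorem integral_norm_sq_eq_sum {F : Ω → EuclideanSpace ℝ ι} (hF : MemLp F 2 μ) :
    ∫ ω, ‖F ω‖ ^ 2 ∂μ = ∑ i, ∫ ω, F ω i ^ 2 ∂μ := by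
  simp_rw [EuclideanSpace.real_norm_sq_eq]
  exact integral_finsetSum _ fun i _ =>
    ((EuclideanSpace.proj (𝕜 := ℝ) i).comp_memLp' hF).integrable_sq

variable [IsFiniteMeasure μ]

theorem integral_condExp_mul_eq_integral_sq (hm : m ≤ m₀) {f : Ω → ℝ} (hf : MemLp f 2 μ) :
    ∫ ω, μ[f|m] ω * f ω ∂μ = ∫ ω, μ[f|m] ω ^ 2 ∂μ := by
  have hfT : Integrable (μ[f|m] * f) μ := (hf.condExp one_le_two).integrable_mul hf
  calc ∫ ω, μ[f|m] ω * f ω ∂μ = ∫ ω, μ[μ[f|m] * f|m] ω ∂μ := (integral_condExp hm).symm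
    _ = ∫ ω, (μ[f|m] * μ[f|m]) ω ∂μ :=
        integral_congr_ae <| condExp_mul_of_stronglyMeasurable_left stronglyMeasurable_condExp
          hfT (hf.integrable one_le_two)
    _ = ∫ ω, μ[f|m] ω ^ 2 ∂μ := by simp only [Pi.mul_apply, sq]

theorem MaxCorrLE.integral_sq_condExp_le {ρ : ℝ} (hcorr : MaxCorrLE μ m m' ρ) (hm : m ≤ m₀)
    {f : Ω → ℝ} (hfm' : Measurable[m'] f) (hf : MemLp f 2 μ) (hf₀ : ∫ ω, f ω ∂μ = 0) :
    ∫ ω, μ[f|m] ω ^ 2 ∂μ ≤ ρ ^ 2 * ∫ ω, f ω ^ 2 ∂μ := by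
  have hT₀ : ∫ ω, μ[f|m] ω ∂μ = 0 := (integral_condExp hm).trans hf₀
  have h := hcorr _ f stronglyMeasurable_condExp.measurable hfm'
    (hf.condExp one_le_two).integrable_sq hf.integrable_sq
  simp only [hT₀, hf₀, sub_zero, mul_zero, integral_condExp_mul_eq_integral_sq hm hf] at h
  exact le_sq_mul_of_le_mul_sqrt_mul_sqrt (integral_nonneg fun _ => sq_nonneg _)
    (integral_nonneg fun _ => sq_nonneg _) ((le_abs_self _).trans h)

theorem MaxCorrLE.integral_norm_sq_condExp_le {ρ : ℝ} (hcorr : MaxCorrLE μ m m' ρ)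
    (hm : m ≤ m₀) {S : Ω → EuclideanSpace ℝ ι} (hSm' : Measurable[m'] S) (hS : MemLp S 2 μ)
    (hS₀ : ∫ ω, S ω ∂μ = 0) :
    ∫ ω, ‖μ[S|m] ω‖ ^ 2 ∂μ ≤ ρ ^ 2 * ∫ ω, ‖S ω‖ ^ 2 ∂μ := by
  rw [integral_norm_sq_eq_sum (hS.condExp one_le_two), integral_norm_sq_eq_sum hS, Finset.mul_sum]
  refine Finset.sum_le_sum fun i _ => ?_
  let π := EuclideanSpace.proj (𝕜 := ℝ) (ι := ι) i
  have hcomp : (fun ω => μ[S|m] ω i) =ᵐ[μ] μ[fun ω => S ω i|m] :=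
    π.comp_condExp_comm (hS.integrable one_le_two)
  have hSi₀ : ∫ ω, S ω i ∂μ = 0 :=
    (π.integral_comp_comm (hS.integrable one_le_two)).trans (by rw [hS₀, map_zero])
  calc ∫ ω, μ[S|m] ω i ^ 2 ∂μ = ∫ ω, μ[fun ω => S ω i|m] ω ^ 2 ∂μ :=
        integral_congr_ae (hcomp.fun_comp fun x => x ^ 2)
    _ ≤ ρ ^ 2 * ∫ ω, S ω i ^ 2 ∂μ :=
        hcorr.integral_sq_condExp_le hm (π.continuous.measurable.comp hSm') (π.comp_memLp' hS)
          hSi₀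

end CondExp

/-- Maximal-correlation contraction of conditional expectation: if every pair of
square-integrable real functions measurable w.r.t. `σ(X)` and `σ(S)` respectively has
correlation at most `ρ`, and `E S = 0`, then `‖E(S|σ(X))‖₂ ≤ ρ‖S‖₂`. -/
theorem stmt_14 {Ω : Type*} [m0 : MeasurableSpace Ω] (μ : Measure Ω) [IsProbabilityMeasure μ]
    {d : ℕ} (X S : Ω → EuclideanSpace ℝ (Fin d))
    (hX : Measurable X) (hS : Measurable S)
    (hS2 : Integrable (fun ω => ‖S ω‖ ^ 2) μ)
    (ρ : ℝ) (hρ : 0 ≤ ρ)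
    (hcorr : ∀ f g : Ω → ℝ,
      Measurable[MeasurableSpace.comap X inferInstance] f →
      Measurable[MeasurableSpace.comap S inferInstance] g →
      Integrable (fun ω => (f ω) ^ 2) μ → Integrable (fun ω => (g ω) ^ 2) μ →
      |(∫ ω, f ω * g ω ∂μ) - (∫ ω, f ω ∂μ) * (∫ ω, g ω ∂μ)| ≤
        ρ * Real.sqrt (∫ ω, (f ω - ∫ ω', f ω' ∂μ) ^ 2 ∂μ)
          * Real.sqrt (∫ ω, (g ω - ∫ ω', g ω' ∂μ) ^ 2 ∂μ))
    (hmean : ∫ ω, S ω ∂μ = 0) :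
    Real.sqrt (∫ ω, ‖(μ[S | MeasurableSpace.comap X inferInstance]) ω‖ ^ 2 ∂μ) ≤
      ρ * Real.sqrt (∫ ω, ‖S ω‖ ^ 2 ∂μ) := by
  have hSL2 : MemLp S 2 μ := (memLp_two_iff_integrable_sq_norm hS.aestronglyMeasurable).2 hS2
  calc √(∫ ω, ‖(μ[S | MeasurableSpace.comap X inferInstance]) ω‖ ^ 2 ∂μ)
      ≤ √(ρ ^ 2 * ∫ ω, ‖S ω‖ ^ 2 ∂μ) := Real.sqrt_le_sqrt <|
        MaxCorrLE.integral_norm_sq_condExp_le hcorr hX.comap_le (comap_measurable S) hSL2 hmean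
    _ = ρ * √(∫ ω, ‖S ω‖ ^ 2 ∂μ) := by rw [Real.sqrt_mul (sq_nonneg ρ), Real.sqrt_sq hρ]
end
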